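/- arXiv:1108.3736 — 2 statements merged into one kernel-verified Lean document; each statement's English description precedes it below -/
import Mathlib

section
/- Let (X,d) be a quasi-metric space and let G, H, M, L ∈ P_fin(BX). Suppose G ≺ H; suppose H ⊑_{EM} M, meaning every a ∈ H has some b ∈ M with a ⊑ b and every b ∈ M has some a ∈ H with a ⊑ b; and suppose H_q(M, L) < δ(G,H), where δ(G,H) = min{(r − s) − d(x,y) : (x,r) ∈ G, (y,s) ∈ H, (x,r) ≺ (y,s)}. Then G ≺ L. -/
open scoped NNReal

/-! Generic sequence notions for an arbitrary "distance" function `ρ`. -/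

def IsCauchySeq {α : Type _} (ρ : α → α → ℝ) (u : ℕ → α) : Prop :=
  ∀ ε : ℝ, 0 < ε → ∃ N, ∀ n m, N ≤ n → n ≤ m → ρ (u n) (u m) < ε

def IsBiCauchySeq {α : Type _} (ρ : α → α → ℝ) (u : ℕ → α) : Prop :=
  ∀ ε : ℝ, 0 < ε → ∃ N, ∀ n m, N ≤ n → N ≤ m → ρ (u n) (u m) < ε

/-- `sup_{m ≥ n} ρ (u m) y`. -/
noncomputable def supTail {α : Type _} (ρ : α → α → ℝ) (u : ℕ → α) (y : α) (n : ℕ) : ℝ :=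
  sSup {t | ∃ m, n ≤ m ∧ t = ρ (u m) y}

/-- `x` is a Yoneda limit of `u`:  `ρ x y = inf_n sup_{m ≥ n} ρ (u m) y` for all `y`. -/
def IsYonedaLim {α : Type _} (ρ : α → α → ℝ) (u : ℕ → α) (x : α) : Prop :=
  ∀ y, ρ x y = sInf (Set.range (supTail ρ u y))

def SeqYonedaCompleteD {α : Type _} (ρ : α → α → ℝ) : Prop :=
  ∀ u, IsCauchySeq ρ u → ∃ x, IsYonedaLim ρ u x

/-- Smyth completeness: every Cauchy sequence converges in the symmetrized metric. -/
def SmythCompleteD {α : Type _} (ρ : α → α → ℝ) : Prop :=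
  ∀ u, IsCauchySeq ρ u → ∃ x, ∀ ε : ℝ, 0 < ε → ∃ N, ∀ n, N ≤ n →
    max (ρ x (u n)) (ρ (u n) x) < ε

/-- `inf_{m ≥ n} ρ e (u m)`. -/
noncomputable def infTail {α : Type _} (ρ : α → α → ℝ) (u : ℕ → α) (e : α) (n : ℕ) : ℝ :=
  sInf {t | ∃ m, n ≤ m ∧ t = ρ e (u m)}

/-- `e` is a finite point: for every Cauchy sequence `u` with Yoneda limit `x`,
`ρ e x = sup_n inf_{m ≥ n} ρ e (u m)`. -/
def IsFinitePoint {α : Type _} (ρ : α → α → ℝ) (e : α) : Prop :=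
  ∀ u x, IsCauchySeq ρ u → IsYonedaLim ρ u x →
    ρ e x = sSup (Set.range (infTail ρ u e))

/-- ω-algebraic: a countable set of finite points such that every point is a Yoneda limit
of a Cauchy sequence of points from it. -/
def OmegaAlgebraicD {α : Type _} (ρ : α → α → ℝ) : Prop :=
  ∃ X0 : Set α, X0.Countable ∧ (∀ e ∈ X0, IsFinitePoint ρ e) ∧
    ∀ x, ∃ u : ℕ → α, (∀ n, u n ∈ X0) ∧ IsCauchySeq ρ u ∧ IsYonedaLim ρ u x

/-- A quasi-metric on `X`. -/
structure QuasiMetric (X : Type _) : Type _ where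
  d : X → X → ℝ
  nonneg : ∀ x y, 0 ≤ d x y
  triangle : ∀ x y z, d x z ≤ d x y + d y z
  eq_iff : ∀ x y, x = y ↔ d x y = 0 ∧ d y x = 0

/-- Formal balls over `X`. -/
abbrev FB (X : Type _) := X × ℝ≥0

/-- Nonempty finite subsets of the space of formal balls. -/
def PFin (X : Type _) : Type _ := {F : Set (FB X) // F.Finite ∧ F.Nonempty}

namespace QuasiMetric

variable {X : Type _} (Q : QuasiMetric X)

def IsT1 : Prop := ∀ x y, Q.d x y = 0 → x = y

def Bounded : Prop := ∃ C : ℝ, ∀ x y, Q.d x y ≤ C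

def ball (x : X) (ε : ℝ) : Set X := {y | Q.d x y < ε}

/-- The topology `τ_d` induced by the quasi-metric. -/
def tau : TopologicalSpace X :=
  TopologicalSpace.generateFrom {s | ∃ x ε, 0 < ε ∧ s = Q.ball x ε}

def dstar (x y : X) : ℝ := max (Q.d x y) (Q.d y x)

def SeqYonedaComplete : Prop := SeqYonedaCompleteD Q.d

def SmythComplete : Prop := SmythCompleteD Q.d

/-- `K` is `d⁻¹`-precompact. -/
def dInvPrecompact (K : Set X) : Prop :=
  ∀ ε : ℝ, 0 < ε → ∃ F : Set X, F.Finite ∧ F ⊆ K ∧ ∀ k ∈ K, ∃ x ∈ F, Q.d k x < ε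

/-- The nonempty compact subsets of `(X, τ_d)`. -/
def K0 : Set (Set X) := {K | K.Nonempty ∧ @IsCompact X Q.tau K}

noncomputable def dPtSet (x : X) (B : Set X) : ℝ := sInf {t | ∃ b ∈ B, t = Q.d x b}

noncomputable def dSetPt (A : Set X) (y : X) : ℝ := sInf {t | ∃ a ∈ A, t = Q.d a y}

/-- The Hausdorff quasi-metric. -/
noncomputable def Hd (A B : Set X) : ℝ :=
  max (sSup {t | ∃ b ∈ B, t = Q.dSetPt A b}) (sSup {t | ∃ a ∈ A, t = Q.dPtSet a B})

/-- Order on formal balls: `(x,r) ⊑ (y,s)  ↔  d x y ≤ r - s`. -/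
def ble (a b : FB X) : Prop := Q.d a.1 b.1 ≤ (a.2 : ℝ) - (b.2 : ℝ)

/-- Auxiliary relation: `(x,r) ≺ (y,s)  ↔  d x y < r - s`. -/
def blt (a b : FB X) : Prop := Q.d a.1 b.1 < (a.2 : ℝ) - (b.2 : ℝ)

def iota (x : X) : FB X := (x, 0)

/-- The quasi-metric `q` on formal balls. -/
noncomputable def q (a b : FB X) : ℝ :=
  max (Q.d a.1 b.1) |(a.2 : ℝ) - (b.2 : ℝ)| + ((b.2 : ℝ) - (a.2 : ℝ))

/-- The Egli–Milner relation `≺_EM` on nonempty finite sets of formal balls. -/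
def em (F G : PFin X) : Prop :=
  (∀ b ∈ G.1, ∃ a ∈ F.1, Q.blt a b) ∧ (∀ a ∈ F.1, ∃ b ∈ G.1, Q.blt a b)

/-- The non-strict Egli–Milner relation `⊑_EM`. -/
def emLE (F G : PFin X) : Prop :=
  (∀ a ∈ F.1, ∃ b ∈ G.1, Q.ble a b) ∧ (∀ b ∈ G.1, ∃ a ∈ F.1, Q.ble a b)

/-- `rF = max { r : (x,r) ∈ F }`. -/
noncomputable def rF (F : PFin X) : ℝ := sSup {t | ∃ p ∈ F.1, t = (p.2 : ℝ)}

/-- `δ(F,G) = min {(r-s) - d x y : (x,r) ∈ F, (y,s) ∈ G, (x,r) ≺ (y,s)}`. -/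
noncomputable def delta (F G : PFin X) : ℝ :=
  sInf {t | ∃ a ∈ F.1, ∃ b ∈ G.1, Q.blt a b ∧ t = ((a.2 : ℝ) - (b.2 : ℝ)) - Q.d a.1 b.1}

/-- The Hausdorff quasi-metric `H_q` on `P_fin(BX)` induced by `q`. -/
noncomputable def Hq (F G : PFin X) : ℝ :=
  max (sSup {t | ∃ a ∈ F.1, t = sInf {s | ∃ b ∈ G.1, s = Q.q a b}})
      (sSup {t | ∃ b ∈ G.1, t = sInf {s | ∃ a ∈ F.1, s = Q.q a b}})

/-- ω-chains in `(P_fin(BX), ≺_EM)`; `c n` plays the role of `F_{n+1}`. -/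
def Chain : Type _ := {c : ℕ → PFin X // ∀ n, Q.em (c n) (c (n + 1))}

def chainLE (c c' : Q.Chain) : Prop := ∀ n, ∃ m, Q.em (c.1 n) (c'.1 m)

def chainEquiv (c c' : Q.Chain) : Prop := Q.chainLE c c' ∧ Q.chainLE c' c

lemma blt_trans {a b c : FB X} (h1 : Q.blt a b) (h2 : Q.blt b c) : Q.blt a c := by
  have h3 := Q.triangle a.1 b.1 c.1
  unfold blt at h1 h2 ⊢
  linarith

lemma em_trans {F G H : PFin X} (h1 : Q.em F G) (h2 : Q.em G H) : Q.em F H := by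
  constructor
  · intro b hb
    obtain ⟨a, ha, hab⟩ := h2.1 b hb
    obtain ⟨a', ha', h'⟩ := h1.1 a ha
    exact ⟨a', ha', Q.blt_trans h' hab⟩
  · intro a ha
    obtain ⟨b, hb, hab⟩ := h1.2 a ha
    obtain ⟨c, hc, hbc⟩ := h2.2 b hb
    exact ⟨c, hc, Q.blt_trans hab hbc⟩

lemma chainLE_refl (c : Q.Chain) : Q.chainLE c c := fun n => ⟨n + 1, c.2 n⟩

lemma chainLE_trans {a b c : Q.Chain} (h1 : Q.chainLE a b) (h2 : Q.chainLE b c) :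
    Q.chainLE a c := by
  intro n
  obtain ⟨m, hm⟩ := h1 n
  obtain ⟨k, hk⟩ := h2 m
  exact ⟨k, Q.em_trans hm hk⟩

def chainSetoid : Setoid Q.Chain where
  r := Q.chainEquiv
  iseqv := ⟨fun c => ⟨Q.chainLE_refl c, Q.chainLE_refl c⟩,
    fun h => ⟨h.2, h.1⟩,
    fun h1 h2 => ⟨Q.chainLE_trans h1.1 h2.1, Q.chainLE_trans h2.2 h1.2⟩⟩

/-- The ω-Plotkin domain `CBX`: equivalence classes of ω-chains in `(P_fin(BX), ≺_EM)`. -/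
def CBX : Type _ := Quotient Q.chainSetoid

/-- The partial order of `CBX`. -/
def cbLE : Q.CBX → Q.CBX → Prop :=
  Quotient.lift₂ Q.chainLE (by
    intro a b a' b' ha hb
    have ha' : Q.chainEquiv a a' := ha
    have hb' : Q.chainEquiv b b' := hb
    exact propext ⟨fun h => Q.chainLE_trans (Q.chainLE_trans ha'.2 h) hb'.1,
      fun h => Q.chainLE_trans (Q.chainLE_trans ha'.1 h) hb'.2⟩)

def chainWB (c c' : Q.Chain) : Prop := ∃ m, ∀ n, Q.em (c.1 n) (c'.1 m)

/-- The way-below relation of `CBX`. -/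
def cbWB : Q.CBX → Q.CBX → Prop :=
  Quotient.lift₂ Q.chainWB (by
    intro a b a' b' ha hb
    have ha' : Q.chainEquiv a a' := ha
    have hb' : Q.chainEquiv b b' := hb
    apply propext
    constructor
    · rintro ⟨m, hm⟩
      obtain ⟨k, hk⟩ := hb'.1 m
      refine ⟨k, fun n => ?_⟩
      obtain ⟨p, hp⟩ := ha'.2 n
      exact Q.em_trans hp (Q.em_trans (hm p) hk)
    · rintro ⟨m, hm⟩
      obtain ⟨k, hk⟩ := hb'.2 m
      refine ⟨k, fun n => ?_⟩
      obtain ⟨p, hp⟩ := ha'.1 n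
      exact Q.em_trans hp (Q.em_trans (hm p) hk))

/-- The Scott topology of `CBX`, generated by the sets `↟I`. -/
def scottTop : TopologicalSpace Q.CBX :=
  TopologicalSpace.generateFrom {s | ∃ I : Q.CBX, s = {J | Q.cbWB I J}}

def upSet (F : PFin X) : Set (FB X) := {b | ∃ a ∈ F.1, Q.ble a b}

/-- `I⁺ = ⋂_n ↑F_n` for a representing chain. -/
def Iplus (c : Q.Chain) : Set (FB X) := ⋂ n, Q.upSet (c.1 n)

noncomputable def IplusQ (I : Q.CBX) : Set (FB X) := Q.Iplus (Quotient.out I)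

/-- `r̄ I = inf { rF : F occurs in some chain representing I }`. -/
noncomputable def rbar (I : Q.CBX) : ℝ :=
  sInf {t | ∃ c : Q.Chain, Quotient.mk Q.chainSetoid c = I ∧ ∃ n, t = rF (c.1 n)}

/-- `c` is a standard representation of `K`: `c n` (playing the role of `F_{n+1}`) is
`{(x_i^j, 1/(n+1)) : 1 ≤ j ≤ n+1, 1 ≤ i ≤ m_j}` where the `x_i^j ∈ K` satisfy
`∀ y ∈ K, ∃ i, d (x_i^j) y < 1/(2 j²)`. -/
def IsStdRep (K : Set X) (c : Q.Chain) : Prop :=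
  ∃ (m : ℕ → ℕ) (x : ℕ → ℕ → X),
    (∀ j i, 1 ≤ j → 1 ≤ i → i ≤ m j → x j i ∈ K) ∧
    (∀ j, 1 ≤ j → ∀ y ∈ K, ∃ i, 1 ≤ i ∧ i ≤ m j ∧ Q.d (x j i) y < 1 / (2 * (j : ℝ) ^ 2)) ∧
    (∀ n : ℕ, (c.1 n).1 =
      {p : FB X | ∃ j i, 1 ≤ j ∧ j ≤ n + 1 ∧ 1 ≤ i ∧ i ≤ m j ∧
        p = (x j i, ((n : ℝ≥0) + 1)⁻¹)})

/-- `D` on representing chains: `sup_n inf_m H_q(F_n, G_m)`. -/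
noncomputable def Dchain (c c' : Q.Chain) : ℝ :=
  sSup {t | ∃ n, t = sInf {s | ∃ m, s = Q.Hq (c.1 n) (c'.1 m)}}

/-- The quasi-metric `D` on `CBX`. -/
noncomputable def D (I J : Q.CBX) : ℝ := Q.Dchain (Quotient.out I) (Quotient.out J)

/-- The topology induced by `D` on `CBX`. -/
def DTop : TopologicalSpace Q.CBX :=
  TopologicalSpace.generateFrom
    {s | ∃ (I : Q.CBX) (ε : ℝ), 0 < ε ∧ s = {J | Q.D I J < ε}}

/-- The hyperspace `K_0(X)` as a type. -/
def K0T : Type _ := {K : Set X // K.Nonempty ∧ @IsCompact X Q.tau K}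

/-- The Vietoris topology on `K_0(X)`. -/
def vietoris : TopologicalSpace Q.K0T :=
  TopologicalSpace.generateFrom
    ({s | ∃ V : Set X, @IsOpen X Q.tau V ∧ s = {K : Q.K0T | (K.1 ∩ V).Nonempty}} ∪
     {s | ∃ V : Set X, @IsOpen X Q.tau V ∧ s = {K : Q.K0T | K.1 ⊆ V}})

/-- The topology of the Hausdorff quasi-metric on `K_0(X)`. -/
def hdTop : TopologicalSpace Q.K0T :=
  TopologicalSpace.generateFrom
    {s | ∃ (K : Q.K0T) (ε : ℝ), 0 < ε ∧ s = {L : Q.K0T | Q.Hd K.1 L.1 < ε}}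

/-- Round ideals of `(P_fin(BX), ≺_EM)`. -/
def IsRoundIdeal (I : Set (PFin X)) : Prop :=
  I.Nonempty ∧ (∀ F G : PFin X, Q.em F G → G ∈ I → F ∈ I) ∧
  (∀ F ∈ I, ∀ G ∈ I, ∃ H ∈ I, Q.em F H ∧ Q.em G H)

end QuasiMetric

/-!
For `a ≺ b ⊑ m` the slack of `a ≺ b` is at least `δ(G,H)`, and `q(m,l) ≥ d(m,l) + (s_l - s_m)`;
so if `q(m,l) < δ(G,H)` the triangle inequality `d(a,l) ≤ d(a,b) + d(b,m) + d(m,l)` still gives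
`a ≺ l`. Chasing the two Egli–Milner conditions of `G ≺ H`, of `H ⊑ M` and the two halves of
`H_q(M,L) < δ(G,H)` yields both halves of `G ≺ L`.
-/

lemma Set.setOf_exists_mem_eq_image {α : Type*} (S : Set α) (f : α → ℝ) :
    {t | ∃ a ∈ S, t = f a} = f '' S := by
  ext t
  simp [eq_comm]

lemma Set.exists_lt_of_sInf_image_lt {α : Type*} {S : Set α} {f : α → ℝ} {c : ℝ}
    (hS : S.Nonempty) (h : sInf {t | ∃ a ∈ S, t = f a} < c) : ∃ a ∈ S, f a < c := by
  rw [Set.setOf_exists_mem_eq_image] at h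
  obtain ⟨_, ⟨a, ha, rfl⟩, hlt⟩ := exists_lt_of_csInf_lt (hS.image f) h
  exact ⟨a, ha, hlt⟩

lemma Set.Finite.le_sSup_image {α : Type*} {S : Set α} (hS : S.Finite) (f : α → ℝ) {a : α}
    (ha : a ∈ S) : f a ≤ sSup {t | ∃ a ∈ S, t = f a} := by
  rw [Set.setOf_exists_mem_eq_image]
  exact le_csSup (hS.image f).bddAbove (Set.mem_image_of_mem f ha)

namespace QuasiMetric

variable {X : Type*} (Q : QuasiMetric X)

lemma d_add_sub_le_q (a b : FB X) : Q.d a.1 b.1 + ((b.2 : ℝ) - (a.2 : ℝ)) ≤ Q.q a b :=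
  add_le_add_left (le_max_left _ _) _

lemma blt_of_ble_of_q_lt {a b m l : FB X} (hbm : Q.ble b m)
    (hml : Q.q m l < ((a.2 : ℝ) - (b.2 : ℝ)) - Q.d a.1 b.1) : Q.blt a l := by
  have hq := Q.d_add_sub_le_q m l
  have hbl := Q.triangle b.1 m.1 l.1
  have hal := Q.triangle a.1 b.1 l.1
  unfold blt ble at *
  linarith

lemma delta_le {G H : PFin X} {a b : FB X} (ha : a ∈ G.1) (hb : b ∈ H.1) (hab : Q.blt a b) :
    Q.delta G H ≤ ((a.2 : ℝ) - (b.2 : ℝ)) - Q.d a.1 b.1 := by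
  let slack : FB X × FB X → ℝ := fun p => ((p.1.2 : ℝ) - (p.2.2 : ℝ)) - Q.d p.1.1 p.2.1
  have hfin : {t | ∃ a ∈ G.1, ∃ b ∈ H.1, Q.blt a b ∧
      t = ((a.2 : ℝ) - (b.2 : ℝ)) - Q.d a.1 b.1}.Finite := by
    refine ((G.2.1.prod H.2.1).image slack).subset ?_
    rintro t ⟨a, ha, b, hb, -, rfl⟩
    exact ⟨(a, b), ⟨ha, hb⟩, rfl⟩
  exact csInf_le hfin.bddBelow ⟨a, ha, b, hb, hab, rfl⟩

lemma blt_of_q_lt_delta {G H : PFin X} {a b m l : FB X} (ha : a ∈ G.1) (hb : b ∈ H.1)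
    (hab : Q.blt a b) (hbm : Q.ble b m) (hml : Q.q m l < Q.delta G H) : Q.blt a l :=
  Q.blt_of_ble_of_q_lt hbm (hml.trans_le (Q.delta_le ha hb hab))

lemma exists_q_lt_of_Hq_lt_left {M L : PFin X} {c : ℝ} (hq : Q.Hq M L < c) {m : FB X}
    (hm : m ∈ M.1) : ∃ l ∈ L.1, Q.q m l < c :=
  Set.exists_lt_of_sInf_image_lt L.2.2 <|
    (M.2.1.le_sSup_image (fun a => sInf {s | ∃ b ∈ L.1, s = Q.q a b}) hm).trans_lt
      (max_lt_iff.1 hq).1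

lemma exists_q_lt_of_Hq_lt_right {M L : PFin X} {c : ℝ} (hq : Q.Hq M L < c) {l : FB X}
    (hl : l ∈ L.1) : ∃ m ∈ M.1, Q.q m l < c :=
  Set.exists_lt_of_sInf_image_lt M.2.2 <|
    (L.2.1.le_sSup_image (fun b => sInf {s | ∃ a ∈ M.1, s = Q.q a b}) hl).trans_lt
      (max_lt_iff.1 hq).2

end QuasiMetric

/-- Lemma 5.12 of the paper: `G ≺ H ⊑ M` and `H_q(M,L) < δ(G,H)` imply
`G ≺ L`. -/
theorem stmt11 {X : Type} (Q : QuasiMetric X) (G H M L : PFin X)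
    (hGH : Q.em G H) (hHM : Q.emLE H M) (hq : Q.Hq M L < Q.delta G H) :
    Q.em G L := by
  constructor
  · intro l hl
    obtain ⟨m, hm, hml⟩ := Q.exists_q_lt_of_Hq_lt_right hq hl
    obtain ⟨b, hb, hbm⟩ := hHM.2 m hm
    obtain ⟨a, ha, hab⟩ := hGH.1 b hb
    exact ⟨a, ha, Q.blt_of_q_lt_delta ha hb hab hbm hml⟩
  · intro a ha
    obtain ⟨b, hb, hab⟩ := hGH.2 a ha
    obtain ⟨m, hm, hbm⟩ := hHM.1 b hb
    obtain ⟨l, hl, hml⟩ := Q.exists_q_lt_of_Hq_lt_left hq hm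
    exact ⟨l, hl, Q.blt_of_q_lt_delta ha hb hab hbm hml⟩
end

section
/- Let (X,d) be a sequentially Yoneda-complete T1 bounded quasi-metric space. If (F_n) and (F'_k) are ∼-equivalent ω-chains in P_fin(BX), and (G_m) and (G'_l) are ∼-equivalent ω-chains in P_fin(BX), then sup_n inf_m H_q(F_n, G_m) = sup_k inf_l H_q(F'_k, G'_l). Consequently the function D(I,J) = sup_n inf_m H_q(F_n, G_m) is well-defined on CBX, independent of the chosen representations of I and J. -/
open scoped NNReal

/-! Since `q` vanishes on pairs `a ≺ b`, the triangle inequality gives `q a b ≤ q a' b'` whenever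
`a ≺ a'` and `b' ≺ b`; hence `H_q F G ≤ H_q F' G'` whenever `F ≺ F'` and `G' ≺ G` in the
Egli–Milner sense. For equivalent chains every `inf_m H_q(F_n, G_m)` is therefore dominated by some
`inf_l H_q(F'_k, G'_l)` and conversely, so the two suprema coincide. -/

theorem sSup_sInf_le_sSup_sInf {α β : Type*} {f : α → β → ℝ} (hf : ∀ a b, 0 ≤ f a b)
    {s s' : Set α} {t t' : Set β} (hs : s.Nonempty) (hs' : s'.Finite) (ht' : t'.Nonempty)
    (h : ∀ a ∈ s, ∃ a' ∈ s', ∀ b' ∈ t', ∃ b ∈ t, f a b ≤ f a' b') :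
    sSup {x | ∃ a ∈ s, x = sInf {y | ∃ b ∈ t, y = f a b}} ≤
      sSup {x | ∃ a' ∈ s', x = sInf {y | ∃ b' ∈ t', y = f a' b'}} := by
  obtain ⟨a₀, ha₀⟩ := hs
  obtain ⟨b₀', hb₀'⟩ := ht'
  have hbddAbove : BddAbove {x | ∃ a' ∈ s', x = sInf {y | ∃ b' ∈ t', y = f a' b'}} :=
    (hs'.image fun a' => sInf {y | ∃ b' ∈ t', y = f a' b'}).bddAbove.mono <| by
      rintro _ ⟨a', ha', rfl⟩
      exact ⟨a', ha', rfl⟩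
  refine csSup_le ⟨_, a₀, ha₀, rfl⟩ ?_
  rintro _ ⟨a, ha, rfl⟩
  obtain ⟨a', ha', hdom⟩ := h a ha
  refine le_trans ?_ (le_csSup hbddAbove ⟨a', ha', rfl⟩)
  refine le_csInf ⟨_, b₀', hb₀', rfl⟩ ?_
  rintro _ ⟨b', hb', rfl⟩
  obtain ⟨b, hb, hle⟩ := hdom b' hb'
  have hbddBelow : BddBelow {y | ∃ b ∈ t, y = f a b} :=
    ⟨0, by rintro _ ⟨b, -, rfl⟩; exact hf a b⟩
  exact (csInf_le hbddBelow ⟨b, hb, rfl⟩).trans hle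

namespace QuasiMetric

variable {X : Type*} (Q : QuasiMetric X)

lemma q_nonneg (a b : FB X) : 0 ≤ Q.q a b := by
  have h₁ : |(a.2 : ℝ) - b.2| ≤ max (Q.d a.1 b.1) |(a.2 : ℝ) - b.2| := le_max_right _ _
  have h₂ := le_abs_self ((a.2 : ℝ) - b.2)
  unfold q
  linarith

lemma q_triangle (a b c : FB X) : Q.q a c ≤ Q.q a b + Q.q b c := by
  have hmax : max (Q.d a.1 c.1) |(a.2 : ℝ) - c.2| ≤
      max (Q.d a.1 b.1) |(a.2 : ℝ) - b.2| + max (Q.d b.1 c.1) |(b.2 : ℝ) - c.2| :=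
    max_le ((Q.triangle a.1 b.1 c.1).trans (add_le_add (le_max_left _ _) (le_max_left _ _)))
      ((abs_sub_le _ _ _).trans (add_le_add (le_max_right _ _) (le_max_right _ _)))
  unfold q
  linarith

lemma q_eq_zero_of_blt {a b : FB X} (h : Q.blt a b) : Q.q a b = 0 := by
  have hd := Q.nonneg a.1 b.1
  unfold blt at h
  unfold q
  rw [abs_of_nonneg (by linarith), max_eq_right h.le]
  ring

lemma q_le_q_of_blt {a a' b b' : FB X} (ha : Q.blt a a') (hb : Q.blt b' b) :
    Q.q a b ≤ Q.q a' b' := by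
  have h₁ := Q.q_triangle a a' b
  have h₂ := Q.q_triangle a' b' b
  rw [Q.q_eq_zero_of_blt ha] at h₁
  rw [Q.q_eq_zero_of_blt hb] at h₂
  linarith

lemma Hq_nonneg (F G : PFin X) : 0 ≤ Q.Hq F G :=
  le_max_of_le_left <| Real.sSup_nonneg <| by
    rintro _ ⟨a, -, rfl⟩
    exact Real.sInf_nonneg (by rintro _ ⟨b, -, rfl⟩; exact Q.q_nonneg a b)

theorem Hq_le_Hq_of_em {F F' G G' : PFin X} (hF : Q.em F F') (hG : Q.em G' G) :
    Q.Hq F G ≤ Q.Hq F' G' := by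
  refine max_le_max ?_ ?_
  · refine sSup_sInf_le_sSup_sInf Q.q_nonneg F.2.2 F'.2.1 G'.2.2 fun a ha => ?_
    obtain ⟨a', ha', haa'⟩ := hF.2 a ha
    refine ⟨a', ha', fun b' hb' => ?_⟩
    obtain ⟨b, hb, hb'b⟩ := hG.2 b' hb'
    exact ⟨b, hb, Q.q_le_q_of_blt haa' hb'b⟩
  · refine sSup_sInf_le_sSup_sInf (f := fun b a => Q.q a b) (fun b a => Q.q_nonneg a b)
      G.2.2 G'.2.1 F'.2.2 fun b hb => ?_
    obtain ⟨b', hb', hb'b⟩ := hG.1 b hb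
    refine ⟨b', hb', fun a' ha' => ?_⟩
    obtain ⟨a, ha, haa'⟩ := hF.1 a' ha'
    exact ⟨a, ha, Q.q_le_q_of_blt haa' hb'b⟩

lemma sInf_Hq_le_sInf_Hq {F F' : PFin X} {g g' : Q.Chain} (hF : Q.em F F')
    (hg : Q.chainLE g' g) :
    sInf {s | ∃ m, s = Q.Hq F (g.1 m)} ≤ sInf {s | ∃ l, s = Q.Hq F' (g'.1 l)} := by
  refine le_csInf ⟨_, 0, rfl⟩ ?_
  rintro _ ⟨l, rfl⟩
  obtain ⟨m, hm⟩ := hg l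
  have hbdd : BddBelow {s | ∃ m, s = Q.Hq F (g.1 m)} :=
    ⟨0, by rintro _ ⟨m, rfl⟩; exact Q.Hq_nonneg _ _⟩
  exact (csInf_le hbdd ⟨m, rfl⟩).trans (Q.Hq_le_Hq_of_em hF hm)

/-- Mutual domination of the two families of infima forces equal suprema even when they are
unbounded, where both `sSup`s take the junk value `0`. -/
theorem Dchain_eq_of_chainEquiv {c c' g g' : Q.Chain} (hc : Q.chainEquiv c c')
    (hg : Q.chainEquiv g g') : Q.Dchain c g = Q.Dchain c' g' := by
  apply csSup_eq_csSup_of_forall_exists_le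
  · rintro _ ⟨n, rfl⟩
    obtain ⟨k, hk⟩ := hc.1 n
    exact ⟨_, ⟨k, rfl⟩, Q.sInf_Hq_le_sInf_Hq hk hg.2⟩
  · rintro _ ⟨k, rfl⟩
    obtain ⟨n, hn⟩ := hc.2 k
    exact ⟨_, ⟨n, rfl⟩, Q.sInf_Hq_le_sInf_Hq hn hg.1⟩

end QuasiMetric

theorem stmt13_general {X : Type} (Q : QuasiMetric X) :
    (∀ c c' g g' : Q.Chain, Q.chainEquiv c c' → Q.chainEquiv g g' →
      Q.Dchain c g = Q.Dchain c' g') ∧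
    (∀ (I J : Q.CBX) (c g : Q.Chain), Quotient.mk Q.chainSetoid c = I →
      Quotient.mk Q.chainSetoid g = J → Q.Dchain c g = Q.D I J) :=
  ⟨fun _ _ _ _ hc hg => Q.Dchain_eq_of_chainEquiv hc hg,
    fun _ _ _ _ hI hJ => Q.Dchain_eq_of_chainEquiv (Quotient.mk_eq_iff_out.mp hI)
      (Quotient.mk_eq_iff_out.mp hJ)⟩

/-- `D` is independent of the chosen representations, hence well-defined on
`CBX`. -/
theorem stmt13 {X : Type} (Q : QuasiMetric X) (hT1 : Q.IsT1) (hB : Q.Bounded)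
    (hY : Q.SeqYonedaComplete) :
    (∀ c c' g g' : Q.Chain, Q.chainEquiv c c' → Q.chainEquiv g g' →
      Q.Dchain c g = Q.Dchain c' g') ∧
    (∀ (I J : Q.CBX) (c g : Q.Chain), Quotient.mk Q.chainSetoid c = I →
      Quotient.mk Q.chainSetoid g = J → Q.Dchain c g = Q.D I J) :=
  stmt13_general Q
end
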